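/- arXiv:2108.09708 — 2 statements merged into one kernel-verified Lean document; each statement's English description precedes it below -/
import Mathlib

section
/- Let K be an abstract elementary class in a finitary language L with λ = LS(K). Then for every L-structure M: M ∈ K if and only if Player II has a winning strategy in the decomposition game G_{ω·ω}(M) of length ω·ω. -/
/-!
If `M ∈ K`, Player II answers each move with a Löwenheim–Skolem hull of that move together
with all her earlier answers; before round `ω · ω` only countably many answers have been
given, so the hull can be taken of size `LS(K)`, and coherence makes the answers a
`≤_K`-chain.

Conversely, only the first `ω` rounds of a winning strategy are needed. Each legal play `g`
of length `ω` yields a `≤_K`-chain whose union `Q_g` lies in `K`. Given plays `g₁` and `g₂`,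
closing under the strategy produces one sequence `T` such that every play that copies some
`gᵢ` for finitely many rounds and then follows `T` has the same union; so all these unions
are one model, lying above `Q_{g₁}` and `Q_{g₂}`. Hence the `Q_g` form a directed system.
Directed systems in an AEC have unions in `K` (by induction on their size, through a chain of
smaller subsystems), and the union of all `Q_g` is `M`, as every element of `M` is played in
some play.
-/

universe u

open FirstOrder FirstOrder.Language Cardinal

namespace AECFormalization

variable (L : FirstOrder.Language.{u, u}) (U : Type u)

/-- An `L`-structure whose universe is a subset of a fixed ambient type `U`. -/
structure SStr : Type u where
  s : Set U
  str : L.Structure s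

attribute [instance] SStr.str

variable {L U}

/-- The literal `L`-substructure relation between structures with universes inside
the same ambient type: the universe of `M` is a subset of that of `N`, and the
interpretations of all function and relation symbols agree. -/
def SStr.Sub (M N : SStr L U) : Prop :=
  ∃ h : M.s ⊆ N.s,
    (∀ (n : ℕ) (f : L.Functions n) (x : Fin n → M.s),
      ((Structure.funMap f x : M.s) : U)
        = ((Structure.funMap f (fun i => Set.inclusion h (x i)) : N.s) : U)) ∧
    (∀ (n : ℕ) (r : L.Relations n) (x : Fin n → M.s),
      Structure.RelMap r x ↔ Structure.RelMap r (fun i => Set.inclusion h (x i)))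

/-- `M` and `N` are isomorphic `L`-structures. -/
def SStr.Iso (M N : SStr L U) : Prop :=
  Nonempty (M.s ≃[L] N.s)

/-- `(M₁, N₁) ≅ (M₂, N₂)` : there is an isomorphism `f : N₁ ≅ N₂` carrying `M₁`
exactly onto `M₂` (so that `f ↾ M₁ : M₁ ≅ M₂` whenever the `Mᵢ` are substructures
of the `Nᵢ`). -/
def PairIso (M₁ N₁ M₂ N₂ : SStr L U) : Prop :=
  ∃ f : N₁.s ≃[L] N₂.s, ∀ x : N₁.s, (x : U) ∈ M₁.s ↔ ((f x : N₂.s) : U) ∈ M₂.s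

/-- `K`, together with the strong substructure relation `le`, is an abstract elementary
class with Löwenheim–Skolem number `lam`, among `L`-structures with universe contained
in the ambient type `U` (only members of cardinality `≥ lam = LS(K)` are considered). -/
structure IsAEC (L : FirstOrder.Language.{u, u}) (U : Type u) (K : Set (SStr L U))
    (le : SStr L U → SStr L U → Prop) (lam : Cardinal.{u}) : Prop where
  le_refl : ∀ M ∈ K, le M M
  le_trans : ∀ {M N P : SStr L U}, le M N → le N P → le M P
  le_antisymm : ∀ {M N : SStr L U}, le M N → le N M → M = N
  mem_of_le : ∀ {M N : SStr L U}, le M N → M ∈ K ∧ N ∈ K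
  sub_of_le : ∀ {M N : SStr L U}, le M N → M.Sub N
  mem_of_iso : ∀ {M N : SStr L U}, M ∈ K → M.Iso N → N ∈ K
  le_of_iso : ∀ {M₁ N₁ M₂ N₂ : SStr L U}, le M₁ N₁ → M₂.Sub N₂ →
    PairIso M₁ N₁ M₂ N₂ → le M₂ N₂
  coherence : ∀ {M₁ M₂ M₃ : SStr L U}, le M₁ M₃ → le M₂ M₃ → M₁.Sub M₂ → le M₁ M₂
  lam_infinite : ℵ₀ ≤ lam
  lam_ge_card : L.card ≤ lam
  card_mem : ∀ M ∈ K, lam ≤ #M.s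
  loewenheim_skolem : ∀ M ∈ K, ∀ A : Set U, A ⊆ M.s →
    ∃ N : SStr L U, le N M ∧ A ⊆ N.s ∧ #N.s ≤ lam + #A
  ls_minimal : ∀ μ : Cardinal.{u}, ℵ₀ ≤ μ → L.card ≤ μ →
    (∀ M ∈ K, ∀ A : Set U, A ⊆ M.s →
      ∃ N : SStr L U, le N M ∧ A ⊆ N.s ∧ #N.s ≤ μ + #A) → lam ≤ μ
  chain : ∀ (ι : Type u) [LinearOrder ι] [IsWellOrder ι (· < ·)] [Nonempty ι]
    (M : ι → SStr L U), (∀ i j, i < j → le (M i) (M j)) → (∀ i, M i ∈ K) →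
    ∃ MU : SStr L U, MU.s = ⋃ i, (M i).s ∧ MU ∈ K ∧ (∀ i, le (M i) MU) ∧
      ∀ N : SStr L U, (∀ i, le (M i) N) → le MU N

/-- `I(lam, K)` : the number of isomorphism classes of members of `K` of cardinality
`lam` (computed among structures with universe inside the ambient type). -/
noncomputable def numModels (K : Set (SStr L U)) (lam : Cardinal.{u}) : Cardinal.{u} :=
  #(Quot fun M N : {M : SStr L U // M ∈ K ∧ #M.s = lam} => M.1.Iso N.1)

/-- `I₂(lam, K)` : the number of isomorphism classes of pairs `(M, N)` with
`M ≤_K N`, both of cardinality `lam`. -/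
noncomputable def numPairs (K : Set (SStr L U)) (le : SStr L U → SStr L U → Prop)
    (lam : Cardinal.{u}) : Cardinal.{u} :=
  #(Quot fun p q : {p : SStr L U × SStr L U //
      p.1 ∈ K ∧ p.2 ∈ K ∧ le p.1 p.2 ∧ #p.1.s = lam ∧ #p.2.s = lam} =>
    PairIso p.1.1 p.1.2 q.1.1 q.1.2)

end AECFormalization

namespace AECFormalization

/-- Player II has a winning strategy in the decomposition game `G_δ(M)` of length `δ`
(relative to `K`, `le` and `lam = LS(K)`):  there is a strategy `σ`, responding to the
history of Player I's moves (Player II's own earlier moves being recovered by following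
the strategy), such that in every play in which Player I's moves `X β` (for `β ≤ α`) are
legal — i.e. subsets of the universe of `M` of cardinality at most `lam` — Player II's
move `σ X α` at round `α < δ` is legal: it is (the universe of) an `L`-substructure
`Y_α` of `M` of cardinality `lam` with `X_α ⊆ Y_α`, whose induced structure belongs to
`K`, and with `Y_β ≤_K Y_α` for all `β < α`. -/
def WinsII (K : Set (SStr L U)) (le : SStr L U → SStr L U → Prop) (lam : Cardinal.{u})
    (M : SStr L U) (δ : Ordinal.{u}) : Prop :=
  ∃ σ : (Ordinal.{u} → Set U) → Ordinal.{u} → SStr L U,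
    (∀ X X' α, (∀ β ≤ α, X β = X' β) → σ X α = σ X' α) ∧
    ∀ (X : Ordinal.{u} → Set U) (α : Ordinal.{u}), α < δ →
      (∀ β ≤ α, X β ⊆ M.s ∧ #(X β) ≤ lam) →
      (σ X α).Sub M ∧ X α ⊆ (σ X α).s ∧ #(σ X α).s = lam ∧ σ X α ∈ K ∧
        ∀ β < α, le (σ X β) (σ X α)

section Substructures

variable {L : FirstOrder.Language.{u, u}} {U : Type u}

theorem SStr.Sub.subset {A B : SStr L U} (h : A.Sub B) : A.s ⊆ B.s := h.1

theorem SStr.Sub.of_subset {A B M : SStr L U} (hA : A.Sub M) (hB : B.Sub M) (h : A.s ⊆ B.s) :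
    A.Sub B :=
  ⟨h, fun n f x => (hA.2.1 n f x).trans (hB.2.1 n f fun i => Set.inclusion h (x i)).symm,
    fun n r x => (hA.2.2 n r x).trans (hB.2.2 n r fun i => Set.inclusion h (x i)).symm⟩

theorem SStr.Sub.eq_of_s_eq {A B : SStr L U} (h : A.Sub B) (hs : A.s = B.s) : A = B := by
  obtain ⟨s, ⟨fA, rA⟩⟩ := A
  obtain ⟨t, ⟨fB, rB⟩⟩ := B
  obtain rfl : s = t := hs
  obtain ⟨_, hf, hr⟩ := h
  have hfun : @fA = @fB := by
    funext n f x
    exact Subtype.ext (hf n f x)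
  have hrel : @rA = @rB := by
    funext n r x
    exact propext (hr n r x)
  subst hfun hrel
  rfl

theorem SStr.sub_of_directed {ι : Sort*} [Nonempty ι] {P : ι → SStr L U} {Q M : SStr L U}
    (hQ : Q.s = ⋃ i, (P i).s) (hPQ : ∀ i, (P i).Sub Q) (hPM : ∀ i, (P i).Sub M)
    (hdir : Directed (· ⊆ ·) fun i => (P i).s) : Q.Sub M := by
  have hQM : Q.s ⊆ M.s := hQ ▸ Set.iUnion_subset fun i => (hPM i).subset
  have tuple_mem : ∀ {n} (x : Fin n → Q.s), ∃ k, ∀ j, (x j : U) ∈ (P k).s := by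
    intro n x
    have hx : ∀ j, (x j : U) ∈ ⋃ i, (P i).s := fun j => hQ ▸ (x j).2
    choose g hg using fun j => Set.mem_iUnion.mp (hx j)
    obtain ⟨k, hk⟩ := hdir.finite_le g
    exact ⟨k, fun j => hk j (hg j)⟩
  refine ⟨hQM, fun n f x => ?_, fun n r x => ?_⟩
  · obtain ⟨k, hk⟩ := tuple_mem x
    exact ((hPQ k).2.1 n f fun j => ⟨x j, hk j⟩).symm.trans
      ((hPM k).2.1 n f fun j => ⟨x j, hk j⟩)
  · obtain ⟨k, hk⟩ := tuple_mem x
    exact ((hPQ k).2.2 n r fun j => ⟨x j, hk j⟩).symm.trans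
      ((hPM k).2.2 n r fun j => ⟨x j, hk j⟩)

end Substructures

universe v

section Cardinality

theorem mk_iUnion_le_of_forall_le {α : Type u} {ι : Type v} {f : ι → Set α} {a : Cardinal.{u}}
    (ha : ℵ₀ ≤ a) (hι : Cardinal.lift.{u} #ι ≤ Cardinal.lift.{v} a) (hf : ∀ i, #(f i) ≤ a) :
    #(⋃ i, f i) ≤ a := by
  rw [← Cardinal.lift_le.{v}]
  calc Cardinal.lift.{v} #(⋃ i, f i)
      ≤ Cardinal.lift.{u} #ι * ⨆ i, Cardinal.lift.{v} #(f i) := mk_iUnion_le_lift f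
    _ ≤ Cardinal.lift.{v} a * Cardinal.lift.{v} a :=
      mul_le_mul' hι (ciSup_le' fun i => Cardinal.lift_le.2 (hf i))
    _ = Cardinal.lift.{v} a := mul_eq_self (by simpa using ha)

theorem mk_iUnion_le_of_countable {α : Type u} {ι : Type v} [Countable ι] {f : ι → Set α}
    {a : Cardinal.{u}} (ha : ℵ₀ ≤ a) (hf : ∀ i, #(f i) ≤ a) : #(⋃ i, f i) ≤ a :=
  mk_iUnion_le_of_forall_le ha ((lift_le_aleph0.2 mk_le_aleph0).trans (aleph0_le_lift.2 ha)) hf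

variable {ι : Type*}

def binaryClosure (w : ι → ι → ι) (A : Set ι) : Set ι :=
  ⋃ n, (fun B => B ∪ Set.image2 w B B)^[n] A

theorem subset_binaryClosure (w : ι → ι → ι) (A : Set ι) : A ⊆ binaryClosure w A :=
  Set.subset_iUnion (fun n => (fun B => B ∪ Set.image2 w B B)^[n] A) 0

theorem binaryClosure_mono (w : ι → ι → ι) : Monotone (binaryClosure w) := fun _ _ h =>
  Set.iUnion_mono fun n =>
    Monotone.iterate (fun _ _ h => Set.union_subset_union h (Set.image2_subset h h)) n h

theorem binaryClosure_closed (w : ι → ι → ι) (A : Set ι) {x y : ι}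
    (hx : x ∈ binaryClosure w A) (hy : y ∈ binaryClosure w A) : w x y ∈ binaryClosure w A := by
  obtain ⟨n, hx⟩ := Set.mem_iUnion.mp hx
  obtain ⟨m, hy⟩ := Set.mem_iUnion.mp hy
  have hmono := Function.monotone_iterate_of_id_le
    (f := fun B : Set ι => B ∪ Set.image2 w B B) fun _ => Set.subset_union_left
  refine Set.mem_iUnion.mpr ⟨max n m + 1, ?_⟩
  rw [Function.iterate_succ_apply']
  exact Or.inr (Set.mem_image2_of_mem (hmono (le_max_left n m) A hx)
    (hmono (le_max_right n m) A hy))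

theorem mk_binaryClosure_le (w : ι → ι → ι) {A : Set ι} {a : Cardinal}
    (ha : ℵ₀ ≤ a) (hA : #A ≤ a) : #(binaryClosure w A) ≤ a := by
  refine mk_iUnion_le_of_countable ha fun n => ?_
  induction n with
  | zero => exact hA
  | succ n ih =>
    rw [Function.iterate_succ_apply']
    calc _ ≤ _ + #(Set.image2 w _ _) := mk_union_le _ _
      _ ≤ a + a * a := add_le_add ih (mk_image2_le.trans (mul_le_mul' ih ih))
      _ = a := by rw [mul_eq_self ha, add_eq_self ha]

end Cardinality

section Unions

variable {L : FirstOrder.Language.{u, u}} {U : Type u}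

structure IsUnion (le : SStr L U → SStr L U → Prop) {ι : Sort*} (P : ι → SStr L U)
    (Q : SStr L U) : Prop where
  s_eq : Q.s = ⋃ i, (P i).s
  le_union : ∀ i, le (P i) Q
  union_le : ∀ W, (∀ i, le (P i) W) → le Q W

variable {K : Set (SStr L U)} {le : SStr L U → SStr L U → Prop} {lam : Cardinal.{u}}

theorem IsAEC.subset_of_le (hK : IsAEC L U K le lam) {M N : SStr L U} (h : le M N) :
    M.s ⊆ N.s :=
  (hK.sub_of_le h).subset

theorem IsAEC.exists_le_card_eq (hK : IsAEC L U K le lam) {M : SStr L U} (hM : M ∈ K)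
    {A : Set U} (hAM : A ⊆ M.s) (hA : #A ≤ lam) : ∃ N, le N M ∧ A ⊆ N.s ∧ #N.s = lam := by
  obtain ⟨N, hNM, hAN, hN⟩ := hK.loewenheim_skolem M hM A hAM
  refine ⟨N, hNM, hAN, _root_.le_antisymm ?_ (hK.card_mem N (hK.mem_of_le hNM).1)⟩
  calc #N.s ≤ lam + #A := hN
    _ ≤ lam + lam := add_le_add_right hA lam
    _ = lam := add_eq_self hK.lam_infinite

theorem IsAEC.exists_isUnion_of_chain (hK : IsAEC L U K le lam) {ι : Type u} [LinearOrder ι]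
    [WellFoundedLT ι] [Nonempty ι] (P : ι → SStr L U) (hP : ∀ i j, i < j → le (P i) (P j))
    (hPK : ∀ i, P i ∈ K) : ∃ Q, IsUnion le P Q := by
  obtain ⟨Q, hQ, -, hle, hleast⟩ := hK.chain ι P hP hPK
  exact ⟨Q, hQ, hle, hleast⟩

theorem IsAEC.exists_isUnion_of_nat_chain (hK : IsAEC L U K le lam) (P : ℕ → SStr L U)
    (hP : ∀ n, le (P n) (P (n + 1))) : ∃ Q, IsUnion le P Q := by
  have : IsTrans (SStr L U) le := ⟨fun _ _ _ => hK.le_trans⟩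
  obtain ⟨Q, hQ, hle, hleast⟩ := hK.exists_isUnion_of_chain (fun n : ULift.{u} ℕ => P n.down)
    (fun i j hij => Nat.rel_of_forall_rel_succ_of_lt le hP hij)
    (fun n => (hK.mem_of_le (hP n.down)).1)
  refine ⟨Q, ?_, fun n => hle ⟨n⟩, fun W hW => hleast W fun n => hW n.down⟩
  rw [hQ]
  exact Equiv.ulift.surjective.iUnion_comp fun n => (P n).s

theorem IsAEC.isUnion_of_cofinal (hK : IsAEC L U K le lam) {ι κ : Sort*} {P : ι → SStr L U}
    {c : κ → ι} {Q : SStr L U} (hQ : IsUnion le (P ∘ c) Q) (hc : ∀ i, ∃ k, le (P i) (P (c k))) :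
    IsUnion le P Q where
  s_eq := hQ.s_eq.trans <|
    (Set.iUnion_subset fun k => Set.subset_iUnion (fun i => (P i).s) (c k)).antisymm
      (Set.iUnion_subset fun i =>
        let ⟨k, hk⟩ := hc i
        Set.subset_iUnion_of_subset k (hK.subset_of_le hk))
  le_union i := let ⟨k, hk⟩ := hc i; hK.le_trans hk (hQ.le_union k)
  union_le W hW := hQ.union_le W fun k => hW (c k)

theorem IsAEC.isUnion_of_isUnion_restrict (hK : IsAEC L U K le lam) {ι : Type*} {κ : Sort*}
    {P : ι → SStr L U} {C : κ → Set ι} (hC : ∀ i, ∃ k, i ∈ C k) {R : κ → SStr L U}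
    (hR : ∀ k, IsUnion le (fun x : C k => P x) (R k)) {Q : SStr L U} (hQ : IsUnion le R Q) :
    IsUnion le P Q where
  s_eq := by
    have hRs : ∀ k, (R k).s = ⋃ x : C k, (P x).s := fun k => (hR k).s_eq
    ext a
    simp only [hQ.s_eq, hRs, Set.mem_iUnion, Subtype.exists]
    constructor
    · rintro ⟨k, i, -, ha⟩
      exact ⟨i, ha⟩
    · rintro ⟨i, ha⟩
      obtain ⟨k, hk⟩ := hC i
      exact ⟨k, i, hk, ha⟩
  le_union i := let ⟨k, hk⟩ := hC i; hK.le_trans ((hR k).le_union ⟨i, hk⟩) (hQ.le_union k)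
  union_le W hW := hQ.union_le W fun k => (hR k).union_le W fun x => hW x

theorem IsAEC.exists_isUnion_of_directed_of_countable (hK : IsAEC L U K le lam) {ι : Type u}
    [Countable ι] [Nonempty ι] (P : ι → SStr L U) (hdir : Directed le P) :
    ∃ Q, IsUnion le P Q := by
  have := Encodable.ofCountable ι
  have : Inhabited ι := Classical.inhabited_of_nonempty ‹_›
  obtain ⟨Q, hQ⟩ := hK.exists_isUnion_of_nat_chain _ hdir.sequence_mono_nat
  exact ⟨Q, hK.isUnion_of_cofinal hQ fun i => ⟨_, hdir.rel_sequence i⟩⟩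

/-- A directed system of uncountable size `κ` is the union of a chain of length `κ` of
subsystems of size `< κ`: enumerate the index set in order type `κ` and close each initial
segment under a choice of upper bounds. -/
theorem IsAEC.exists_isUnion_of_directed_of_forall_lt (hK : IsAEC L U K le lam) {ι : Type u}
    [Nonempty ι] (P : ι → SStr L U) (hdir : Directed le P) (hι : ℵ₀ < #ι)
    (ih : ∀ (ι' : Type u) [Nonempty ι'] (P' : ι' → SStr L U), #ι' < #ι → Directed le P' →
      ∃ Q, IsUnion le P' Q) :
    ∃ Q, IsUnion le P Q := by
  choose w hw₁ hw₂ using hdir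
  obtain ⟨e⟩ : Nonempty ((#ι).ord.ToType ≃ ι) := Cardinal.eq.mp (by simp)
  have : Nonempty (#ι).ord.ToType := e.nonempty
  let C : (#ι).ord.ToType → Set ι := fun α => binaryClosure w (e '' Set.Iic α)
  have he : ∀ α, e α ∈ C α := fun α => subset_binaryClosure _ _ ⟨α, Set.mem_Iic.2 le_rfl, rfl⟩
  have hC : ∀ α, #(C α) < #ι := fun α => by
    have hIic : #(Set.Iic α) < #ι := by
      rw [← Set.Iio_insert]
      exact mk_insert_le.trans_lt
        (add_lt_of_lt hι.le (by simpa using mk_Iio_lt α) (one_lt_aleph0.trans hι))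
    exact (mk_binaryClosure_le w (le_max_left _ _)
      (mk_image_le.trans (le_max_right ℵ₀ #(Set.Iic α)))).trans_lt (max_lt hι hIic)
  have hR : ∀ α, ∃ R, IsUnion le (fun x : C α => P x) R := fun α =>
    have : Nonempty (C α) := ⟨⟨e α, he α⟩⟩
    ih (C α) _ (hC α) fun x y =>
      ⟨⟨w x y, binaryClosure_closed w _ x.2 y.2⟩, hw₁ x y, hw₂ x y⟩
  choose R hR using hR
  have hRchain : ∀ α β, α < β → le (R α) (R β) := fun α β h =>
    (hR α).union_le _ fun x =>
      (hR β).le_union ⟨x, binaryClosure_mono w (Set.image_mono (Set.Iic_subset_Iic.2 h.le)) x.2⟩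
  obtain ⟨Q, hQ⟩ := hK.exists_isUnion_of_chain R hRchain
    fun α => (hK.mem_of_le ((hR α).le_union ⟨e α, he α⟩)).2
  refine ⟨Q, hK.isUnion_of_isUnion_restrict (fun i => ⟨e.symm i, ?_⟩) hR hQ⟩
  simpa using he (e.symm i)

theorem IsAEC.exists_isUnion_of_directed (hK : IsAEC L U K le lam) {ι : Type u} [Nonempty ι]
    (P : ι → SStr L U) (hdir : Directed le P) : ∃ Q, IsUnion le P Q := by
  suffices ∀ κ : Cardinal.{u}, ∀ (ι : Type u) [Nonempty ι] (P : ι → SStr L U), #ι = κ →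
      Directed le P → ∃ Q, IsUnion le P Q from this _ ι P rfl hdir
  intro κ
  induction κ using Cardinal.lt_wf.induction with
  | _ κ ih =>
    rintro ι _ P rfl hdir
    rcases le_or_gt #ι ℵ₀ with hι | hι
    · have : Countable ι := mk_le_aleph0_iff.mp hι
      exact hK.exists_isUnion_of_directed_of_countable P hdir
    · exact hK.exists_isUnion_of_directed_of_forall_lt P hdir hι
        fun ι' _ P' h => ih _ h ι' P' rfl

end Unions

section LoewenheimSkolemStrategy

variable {L : FirstOrder.Language.{u, u}} {U : Type u} {K : Set (SStr L U)}
  {le : SStr L U → SStr L U → Prop} {lam : Cardinal.{u}}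

/-- `epsilon` returns junk when `M` has no such hull of cardinality `lam`, e.g. when `M ∉ K`. -/
noncomputable def hullStrategy (le : SStr L U → SStr L U → Prop) (lam : Cardinal.{u})
    (M : SStr L U) (X : Ordinal.{u} → Set U) (α : Ordinal.{u}) : SStr L U :=
  @Classical.epsilon _ ⟨M⟩ fun N =>
    le N M ∧ X α ∪ ⋃ β : Set.Iio α, (hullStrategy le lam M X β).s ⊆ N.s ∧ #N.s = lam
termination_by α
decreasing_by exact β.2

theorem hullStrategy_congr (M : SStr L U) {X X' : Ordinal.{u} → Set U} (α : Ordinal.{u})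
    (h : ∀ β ≤ α, X β = X' β) : hullStrategy le lam M X α = hullStrategy le lam M X' α := by
  induction α using WellFoundedLT.induction with
  | _ α ih =>
    have hunion : ⋃ β : Set.Iio α, (hullStrategy le lam M X β).s =
        ⋃ β : Set.Iio α, (hullStrategy le lam M X' β).s :=
      Set.iUnion_congr fun β => by rw [ih β β.2 fun γ hγ => h γ (hγ.trans β.2.le)]
    rw [hullStrategy, hullStrategy, h α le_rfl, hunion]

theorem IsAEC.hullStrategy_spec (hK : IsAEC L U K le lam) {M : SStr L U} (hM : M ∈ K)
    {X : Ordinal.{u} → Set U} (α : Ordinal.{u}) (hα : α.card ≤ lam)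
    (hX : ∀ β ≤ α, X β ⊆ M.s ∧ #(X β) ≤ lam) :
    le (hullStrategy le lam M X α) M ∧ X α ⊆ (hullStrategy le lam M X α).s ∧
      #(hullStrategy le lam M X α).s = lam ∧
      ∀ β < α, le (hullStrategy le lam M X β) (hullStrategy le lam M X α) := by
  induction α using WellFoundedLT.induction with
  | _ α ih =>
    set Y := hullStrategy le lam M X
    have hY : ∀ β < α, le (Y β) M ∧ #(Y β).s = lam := fun β hβ =>
      have h := ih β hβ ((Ordinal.card_le_card hβ.le).trans hα)
        fun γ hγ => hX γ (hγ.trans hβ.le)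
      ⟨h.1, h.2.2.1⟩
    have hAM : X α ∪ ⋃ β : Set.Iio α, (Y β).s ⊆ M.s :=
      Set.union_subset (hX α le_rfl).1
        (Set.iUnion_subset fun β => hK.subset_of_le (hY β β.2).1)
    have hA : #(X α ∪ ⋃ β : Set.Iio α, (Y β).s : Set U) ≤ lam := by
      refine (mk_union_le _ _).trans ?_
      calc _ ≤ lam + lam := add_le_add (hX α le_rfl).2
            (mk_iUnion_le_of_forall_le hK.lam_infinite (by simpa [← Ordinal.lift_card] using hα)
              fun β : Set.Iio α => (hY β β.2).2.le)
        _ = lam := add_eq_self hK.lam_infinite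
    obtain ⟨hle, hsub, hcard⟩ := Classical.epsilon_spec (hK.exists_le_card_eq hM hAM hA)
    rw [← hullStrategy] at hle hsub hcard
    refine ⟨hle, Set.subset_union_left.trans hsub, hcard, fun β hβ => ?_⟩
    have hβα : (Y β).s ⊆ (Y α).s :=
      ((Set.subset_iUnion (fun γ : Set.Iio α => (Y γ).s) ⟨β, hβ⟩).trans
        Set.subset_union_right).trans hsub
    exact hK.coherence (hY β hβ).1 hle
      ((hK.sub_of_le (hY β hβ).1).of_subset (hK.sub_of_le hle) hβα)

theorem IsAEC.winsII_of_mem (hK : IsAEC L U K le lam) {M : SStr L U} (hM : M ∈ K)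
    {δ : Ordinal.{u}} (hδ : δ.card ≤ lam) : WinsII K le lam M δ := by
  refine ⟨hullStrategy le lam M, fun X X' α h => hullStrategy_congr M α h, fun X α hα hX => ?_⟩
  obtain ⟨hle, hsub, hcard, hchain⟩ :=
    hK.hullStrategy_spec hM α ((Ordinal.card_le_card hα.le).trans hδ) hX
  exact ⟨hK.sub_of_le hle, hsub, hcard, (hK.mem_of_le hle).1, hchain⟩

end LoewenheimSkolemStrategy

section NatStrategies

variable {L : FirstOrder.Language.{u, u}} {U : Type u} {K : Set (SStr L U)}
  {le : SStr L U → SStr L U → Prop} {lam : Cardinal.{u}} {M : SStr L U}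

def IsLegalPlay (M : SStr L U) (lam : Cardinal.{u}) (g : ℕ → Set U) : Prop :=
  ∀ n, g n ⊆ M.s ∧ #(g n) ≤ lam

structure IsWinningNatStrategy (le : SStr L U → SStr L U → Prop) (lam : Cardinal.{u})
    (M : SStr L U) (τ : (ℕ → Set U) → ℕ → SStr L U) : Prop where
  congr : ∀ g g' n, (∀ m ≤ n, g m = g' m) → τ g n = τ g' n
  sub : ∀ g, IsLegalPlay M lam g → ∀ n, (τ g n).Sub M
  subset : ∀ g, IsLegalPlay M lam g → ∀ n, g n ⊆ (τ g n).s
  card : ∀ g, IsLegalPlay M lam g → ∀ n, #(τ g n).s = lam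
  le_of_lt : ∀ g, IsLegalPlay M lam g → ∀ m n, m < n → le (τ g m) (τ g n)

def natPlay (g : ℕ → Set U) (β : Ordinal.{u}) : Set U :=
  {x | ∃ n : ℕ, (n : Ordinal.{u}) = β ∧ x ∈ g n}

@[simp]
theorem natPlay_natCast (g : ℕ → Set U) (n : ℕ) : natPlay g (n : Ordinal.{u}) = g n := by
  ext x
  simp [natPlay]

theorem WinsII.exists_isWinningNatStrategy {δ : Ordinal.{u}} (h : WinsII K le lam M δ)
    (hδ : Ordinal.omega0 ≤ δ) : ∃ τ, IsWinningNatStrategy le lam M τ := by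
  obtain ⟨σ, hcongr, hwin⟩ := h
  have hσ : ∀ g, IsLegalPlay M lam g → ∀ n : ℕ, _ := fun g hg n =>
    hwin (natPlay g) n ((Ordinal.natCast_lt_omega0 n).trans_le hδ) fun β hβ => by
      obtain ⟨m, rfl⟩ := Ordinal.lt_omega0.mp (hβ.trans_lt (Ordinal.natCast_lt_omega0 n))
      simpa using hg m
  refine ⟨fun g n => σ (natPlay g) n, ⟨fun g g' n h => hcongr _ _ _ fun β hβ => ?_,
    fun g hg n => (hσ g hg n).1, fun g hg n => by simpa using (hσ g hg n).2.1,
    fun g hg n => (hσ g hg n).2.2.1,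
    fun g hg m n hmn => (hσ g hg n).2.2.2.2 m (Nat.cast_lt.mpr hmn)⟩⟩
  obtain ⟨m, rfl⟩ := Ordinal.lt_omega0.mp (hβ.trans_lt (Ordinal.natCast_lt_omega0 n))
  simpa using h m (by exact_mod_cast hβ)

variable {τ : (ℕ → Set U) → ℕ → SStr L U}

theorem IsWinningNatStrategy.subset_of_le (hK : IsAEC L U K le lam)
    (hτ : IsWinningNatStrategy le lam M τ) {g : ℕ → Set U} (hg : IsLegalPlay M lam g) {m n : ℕ}
    (h : m ≤ n) : (τ g m).s ⊆ (τ g n).s := by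
  rcases h.lt_or_eq with h | rfl
  · exact hK.subset_of_le (hτ.le_of_lt g hg m n h)
  · rfl

theorem IsWinningNatStrategy.exists_isUnion (hK : IsAEC L U K le lam)
    (hτ : IsWinningNatStrategy le lam M τ) {g : ℕ → Set U} (hg : IsLegalPlay M lam g) :
    ∃ Q, IsUnion le (τ g) Q ∧ Q.Sub M := by
  obtain ⟨Q, hQ⟩ := hK.exists_isUnion_of_nat_chain (τ g) fun n =>
    hτ.le_of_lt g hg n (n + 1) n.lt_succ_self
  refine ⟨Q, hQ, SStr.sub_of_directed hQ.s_eq (fun n => hK.sub_of_le (hQ.le_union n))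
    (hτ.sub g hg) ?_⟩
  exact Monotone.directed_le fun m n h => hτ.subset_of_le hK hg h

end NatStrategies

section Merging

variable {L : FirstOrder.Language.{u, u}} {U : Type u} {K : Set (SStr L U)}
  {le : SStr L U → SStr L U → Prop} {lam : Cardinal.{u}} {M : SStr L U}
  {τ : (ℕ → Set U) → ℕ → SStr L U} {ι : Type*}

def splice (g S : ℕ → Set U) (m : ℕ) : ℕ → Set U :=
  fun j => if j ≤ m then g j else S (j - (m + 1))

theorem IsLegalPlay.splice {g S : ℕ → Set U} (hg : IsLegalPlay M lam g)
    (hS : IsLegalPlay M lam S) (m : ℕ) : IsLegalPlay M lam (splice g S m) := fun j => by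
  unfold AECFormalization.splice
  split_ifs
  exacts [hg j, hS _]

/-- Term `k + 1` collects round `m + 1 + k` of every play that copies `g i` up to round `m`
and then follows this sequence; that round only depends on the terms up to `k`, which is what
the truncation records. -/
def mergeSeq (τ : (ℕ → Set U) → ℕ → SStr L U) (g : ι → ℕ → Set U) : ℕ → Set U
  | 0 => ∅
  | k + 1 => ⋃ p : ι × ℕ,
    (τ (splice (g p.1) (fun j => if j ≤ k then mergeSeq τ g j else ∅) p.2) (p.2 + 1 + k)).s

theorem IsWinningNatStrategy.mergeSeq_succ (hτ : IsWinningNatStrategy le lam M τ)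
    (g : ι → ℕ → Set U) (k : ℕ) :
    mergeSeq τ g (k + 1) =
      ⋃ p : ι × ℕ, (τ (splice (g p.1) (mergeSeq τ g) p.2) (p.2 + 1 + k)).s := by
  rw [mergeSeq]
  refine Set.iUnion_congr fun p => congrArg SStr.s (hτ.congr _ _ _ fun j hj => ?_)
  dsimp only [splice]
  split_ifs <;> first | rfl | omega

theorem IsWinningNatStrategy.isLegalPlay_mergeSeq [Countable ι] (hK : IsAEC L U K le lam)
    (hτ : IsWinningNatStrategy le lam M τ) {g : ι → ℕ → Set U}
    (hg : ∀ i, IsLegalPlay M lam (g i)) : IsLegalPlay M lam (mergeSeq τ g) := by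
  have hempty : (∅ : Set U) ⊆ M.s ∧ #(∅ : Set U) ≤ lam := ⟨Set.empty_subset _, by simp⟩
  intro k
  induction k using Nat.strong_induction_on with
  | _ k ih =>
    cases k with
    | zero =>
      rw [mergeSeq]
      exact hempty
    | succ k =>
      have hS : ∀ p : ι × ℕ, IsLegalPlay M lam
          (splice (g p.1) (fun j => if j ≤ k then mergeSeq τ g j else ∅) p.2) := fun p =>
        (hg p.1).splice (fun j => by
          split_ifs with h
          exacts [ih j (Nat.lt_succ_of_le h), hempty]) _
      rw [mergeSeq]
      exact ⟨Set.iUnion_subset fun p => (hτ.sub _ (hS p) _).subset,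
        mk_iUnion_le_of_countable hK.lam_infinite fun p => (hτ.card _ (hS p) _).le⟩

theorem IsWinningNatStrategy.iUnion_splice_mergeSeq [Countable ι] (hK : IsAEC L U K le lam)
    (hτ : IsWinningNatStrategy le lam M τ) {g : ι → ℕ → Set U}
    (hg : ∀ i, IsLegalPlay M lam (g i)) (i : ι) (m : ℕ) :
    ⋃ n, (τ (splice (g i) (mergeSeq τ g) m) n).s = ⋃ k, mergeSeq τ g k := by
  have hS := (hg i).splice (hτ.isLegalPlay_mergeSeq hK hg) m
  refine (Set.iUnion_subset fun n => ?_).antisymm (Set.iUnion_subset fun k => ?_)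
  · refine (hτ.subset_of_le hK hS (by omega : n ≤ m + 1 + n)).trans
      (Set.subset_iUnion_of_subset (n + 1) ?_)
    rw [hτ.mergeSeq_succ]
    exact Set.subset_iUnion (fun p : ι × ℕ => (τ (splice (g p.1) _ p.2) (p.2 + 1 + n)).s) (i, m)
  · have h := hτ.subset _ hS (m + 1 + k)
    rw [splice, if_neg (by omega), show m + 1 + k - (m + 1) = k by omega] at h
    exact Set.subset_iUnion_of_subset (m + 1 + k) h

theorem IsWinningNatStrategy.exists_common_union [Countable ι] (hK : IsAEC L U K le lam)
    (hτ : IsWinningNatStrategy le lam M τ) {g : ι → ℕ → Set U}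
    (hg : ∀ i, IsLegalPlay M lam (g i)) :
    ∃ A : Set U, ∀ i m, ∃ S, IsLegalPlay M lam S ∧ τ S m = τ (g i) m ∧ ⋃ n, (τ S n).s = A :=
  ⟨⋃ k, mergeSeq τ g k, fun i m => ⟨splice (g i) (mergeSeq τ g) m,
    (hg i).splice (hτ.isLegalPlay_mergeSeq hK hg) m,
    hτ.congr _ _ _ fun _ hj => if_pos hj, hτ.iUnion_splice_mergeSeq hK hg i m⟩⟩

end Merging

section Backward

variable {L : FirstOrder.Language.{u, u}} {U : Type u} {K : Set (SStr L U)}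
  {le : SStr L U → SStr L U → Prop} {lam : Cardinal.{u}} {M : SStr L U}
  {τ : (ℕ → Set U) → ℕ → SStr L U}

theorem IsWinningNatStrategy.directed (hK : IsAEC L U K le lam)
    (hτ : IsWinningNatStrategy le lam M τ) {Q : {g // IsLegalPlay M lam g} → SStr L U}
    (hQ : ∀ g, IsUnion le (τ g.1) (Q g)) (hQM : ∀ g, (Q g).Sub M) : Directed le Q := by
  intro g₁ g₂
  obtain ⟨A, hA⟩ := hτ.exists_common_union hK (g := fun b => cond b g₁.1 g₂.1)
    (Bool.forall_bool.mpr ⟨g₂.2, g₁.2⟩)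
  have hQ_eq : ∀ S T : {g // IsLegalPlay M lam g}, ⋃ n, (τ S.1 n).s = A →
      ⋃ n, (τ T.1 n).s = A → Q S = Q T := fun S T hS hT => by
    have hs : (Q S).s = (Q T).s := by rw [(hQ S).s_eq, (hQ T).s_eq, hS, hT]
    exact ((hQM S).of_subset (hQM T) hs.le).eq_of_s_eq hs
  obtain ⟨S₀, hS₀, -, hS₀A⟩ := hA true 0
  have hle : ∀ b m, le (τ (cond b g₁.1 g₂.1) m) (Q ⟨S₀, hS₀⟩) := fun b m => by
    obtain ⟨S, hS, hSm, hSA⟩ := hA b m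
    rw [← hSm, hQ_eq ⟨S₀, hS₀⟩ ⟨S, hS⟩ hS₀A hSA]
    exact (hQ ⟨S, hS⟩).le_union m
  exact ⟨⟨S₀, hS₀⟩, (hQ g₁).union_le _ (hle true), (hQ g₂).union_le _ (hle false)⟩

theorem IsAEC.mem_of_isWinningNatStrategy (hK : IsAEC L U K le lam)
    (hτ : IsWinningNatStrategy le lam M τ) : M ∈ K := by
  choose Q hQ hQM using fun g : {g // IsLegalPlay M lam g} => hτ.exists_isUnion hK g.2
  have hconst : ∀ a ∈ M.s, IsLegalPlay M lam fun _ => {a} := fun a ha _ =>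
    ⟨Set.singleton_subset_iff.mpr ha, by simpa using one_le_aleph0.trans hK.lam_infinite⟩
  have : Nonempty {g // IsLegalPlay M lam g} := ⟨⟨_, fun _ => ⟨Set.empty_subset _, by simp⟩⟩⟩
  have hdir := hτ.directed hK hQ hQM
  obtain ⟨N, hN⟩ := hK.exists_isUnion_of_directed Q hdir
  have hNM : N.Sub M := SStr.sub_of_directed hN.s_eq (fun g => hK.sub_of_le (hN.le_union g))
    hQM (hdir.mono_comp _ fun _ _ => hK.subset_of_le)
  have hMN : M.s ⊆ N.s := fun a ha => by
    have hg := hconst a ha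
    refine hK.subset_of_le (hN.le_union ⟨_, hg⟩) ?_
    rw [(hQ ⟨_, hg⟩).s_eq]
    exact Set.mem_iUnion_of_mem 0 (hτ.subset _ hg 0 rfl)
  rw [← hNM.eq_of_s_eq (hNM.subset.antisymm hMN)]
  exact (hK.mem_of_le (hN.le_union (Classical.arbitrary _))).2

end Backward

/-- Main Theorem 3.8 of the paper, game form.  For an AEC `K` with
`lam = LS(K)`: an `L`-structure `M` belongs to `K` if and only if Player II has a
winning strategy in the decomposition game of length `ω · ω` on `M`. -/
theorem mem_iff_winsII (L : FirstOrder.Language.{u, u}) (U : Type u)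
    (K : Set (SStr L U)) (le : SStr L U → SStr L U → Prop) (lam : Cardinal.{u})
    (hK : IsAEC L U K le lam) (M : SStr L U) :
    M ∈ K ↔ WinsII K le lam M (Ordinal.omega0 * Ordinal.omega0) := by
  refine ⟨fun hM => hK.winsII_of_mem hM ?_, fun h => ?_⟩
  · simpa using hK.lam_infinite
  · obtain ⟨τ, hτ⟩ := h.exists_isWinningNatStrategy (Ordinal.le_mul_left _ Ordinal.omega0_pos)
    exact hK.mem_of_isWinningNatStrategy hτ

end AECFormalization
end

section
/- There are exactly 2^{ℵ₀} isomorphism classes of pairs (M,N), where N is a countable dense linear order without endpoints, M ⊆ N is a suborder of N that is itself a countable dense linear order without endpoints, and two pairs (M₁,N₁), (M₂,N₂) are isomorphic if and only if there is an order isomorphism f : N₁ → N₂ with f(M₁) = M₂. -/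
open Cardinal Set

/-!
Counting gives the upper bound: a pair is a linear order on `α` together with a subset of `α`.

For the lower bound, code `S ⊆ ℕ` by a pair `M ⊆ N_S ⊆ ℚ`. Here `M = (-∞, 0) ∪ ⋃ₙ (n + ½, n + 1)`
is open, and `N_S` adds inside each `(n, n + ½)` the gap `{n + ¼}` if `n ∈ S` and the whole
interval otherwise. Two points of `N_S ∖ M` lie in the same gap iff no point of `M` lies between
them, so an isomorphism of pairs permutes the gaps monotonically. The gaps are indexed by `ℕ`,
whose only order automorphism is the identity, and a dense gap cannot be mapped onto a one-point
gap; hence `S` is recovered from the isomorphism class.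
-/

section OrderIsoTransfer

variable {X Y : Type*} [Preorder X] [Preorder Y]

theorem OrderIso.noMaxOrder (f : X ≃o Y) [NoMaxOrder Y] : NoMaxOrder X where
  exists_gt a :=
    let ⟨b, hb⟩ := exists_gt (f a)
    ⟨f.symm b, by rwa [← f.lt_iff_lt, f.apply_symm_apply]⟩

theorem OrderIso.noMinOrder (f : X ≃o Y) [NoMinOrder Y] : NoMinOrder X where
  exists_lt a :=
    let ⟨b, hb⟩ := exists_lt (f a)
    ⟨f.symm b, by rwa [← f.lt_iff_lt, f.apply_symm_apply]⟩

theorem OrderIso.inter_Ioo_nonempty_iff (G : X ≃o Y) {M : Set X} {M' : Set Y}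
    (hG : ∀ x, x ∈ M ↔ G x ∈ M') (x y : X) :
    (M' ∩ Ioo (G x) (G y)).Nonempty ↔ (M ∩ Ioo x y).Nonempty := by
  have hM : M = G ⁻¹' M' := Set.ext hG
  rw [← G.image_Ioo, inter_comm, ← image_inter_preimage, image_nonempty, hM, inter_comm]

end OrderIsoTransfer

theorem Set.denselyOrdered_coe {X : Type*} [Preorder X] {s : Set X}
    (h : ∀ a ∈ s, ∀ b ∈ s, a < b → (s ∩ Ioo a b).Nonempty) : DenselyOrdered s where
  dense a b hab :=
    let ⟨c, hc, hac, hcb⟩ := h a a.2 b b.2 hab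
    ⟨⟨c, hc⟩, hac, hcb⟩

section OpenSet

variable {X : Type*} [TopologicalSpace X] [LinearOrder X] [OrderTopology X] [DenselyOrdered X]
  {s : Set X} {a b : X}

theorem IsOpen.inter_Ioo_nonempty_of_left_mem (hs : IsOpen s) (ha : a ∈ s) (hab : a < b) :
    (s ∩ Ioo a b).Nonempty :=
  mem_closure_iff_nhds.1 (closure_Ioo hab.ne ▸ left_mem_Icc.2 hab.le) s (hs.mem_nhds ha)

theorem IsOpen.inter_Ioo_nonempty_of_right_mem (hs : IsOpen s) (hb : b ∈ s) (hab : a < b) :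
    (s ∩ Ioo a b).Nonempty :=
  mem_closure_iff_nhds.1 (closure_Ioo hab.ne ▸ right_mem_Icc.2 hab.le) s (hs.mem_nhds hb)

end OpenSet

def IsDLOPair (α : Type*) (x : LinearOrder α × Set α) : Prop :=
  (letI := x.1
   DenselyOrdered α ∧ NoMaxOrder α ∧ NoMinOrder α) ∧
  (letI := x.1
   Infinite x.2 ∧ DenselyOrdered x.2 ∧ NoMaxOrder x.2 ∧ NoMinOrder x.2)

def DLOPair (α : Type*) : Type _ := Subtype (IsDLOPair α)

namespace DLOPair

variable {α : Type*}

def Iso (p q : DLOPair α) : Prop :=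
  ∃ f : α ≃ α, (∀ a b : α, p.1.1.le a b ↔ q.1.1.le (f a) (f b)) ∧
    ∀ a : α, a ∈ p.1.2 ↔ f a ∈ q.1.2

theorem iso_equivalence : Equivalence (@Iso α) where
  refl _ := ⟨Equiv.refl α, fun _ _ => Iff.rfl, fun _ => Iff.rfl⟩
  symm := fun ⟨f, hle, hmem⟩ =>
    ⟨f.symm, fun a b => by rw [hle, f.apply_symm_apply, f.apply_symm_apply],
      fun a => by rw [hmem, f.apply_symm_apply]⟩
  trans := fun ⟨f, hle, hmem⟩ ⟨g, gle, gmem⟩ =>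
    ⟨f.trans g, fun a b => (hle a b).trans (gle _ _), fun a => (hmem a).trans (gmem _)⟩

theorem mk_linearOrder_le (α : Type*) : #(LinearOrder α) ≤ 2 ^ (#α * #α) := by
  have hle : Function.Injective fun L : LinearOrder α => {p : α × α | L.le p.1 p.2} :=
    fun _ _ h => LinearOrder.ext fun x y => iff_of_eq (congrArg (fun s => (x, y) ∈ s) h)
  simpa [mk_set, mk_prod] using mk_le_of_injective hle

theorem mk_quot_iso_le (α : Type*) [Infinite α] : #(Quot (@Iso α)) ≤ 2 ^ #α :=
  calc #(Quot (@Iso α)) ≤ #(LinearOrder α × Set α) := mk_quot_le.trans (mk_subtype_le _)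
    _ ≤ 2 ^ (#α * #α) * 2 ^ #α := by
      rw [mk_prod, lift_id, lift_id, mk_set]
      gcongr
      exact mk_linearOrder_le α
    _ = 2 ^ #α := by
      rw [← power_add, mul_eq_self (aleph0_le_mk α), add_eq_self (aleph0_le_mk α)]

section OfEquiv

variable {β β' : Type*} [LinearOrder β] [DenselyOrdered β] [NoMaxOrder β] [NoMinOrder β]
  [LinearOrder β'] [DenselyOrdered β'] [NoMaxOrder β'] [NoMinOrder β']

theorem isDLOPair_lift (e : α ≃ β) (M : Set β)
    [Infinite M] [DenselyOrdered M] [NoMaxOrder M] [NoMinOrder M] :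
    IsDLOPair α (LinearOrder.lift' e e.injective, e ⁻¹' M) := by
  let _ : LinearOrder α := LinearOrder.lift' e e.injective
  let f : α ≃o β := ⟨e, Iff.rfl⟩
  let fM : e ⁻¹' M ≃o M := ⟨e.subtypeEquiv fun _ => Iff.rfl, Iff.rfl⟩
  exact ⟨⟨(denselyOrdered_iff_of_orderIsoClass f).2 ‹_›, f.noMaxOrder, f.noMinOrder⟩,
    fM.toEquiv.infinite_iff.2 ‹_›, (denselyOrdered_iff_of_orderIsoClass fM).2 ‹_›,
    fM.noMaxOrder, fM.noMinOrder⟩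

def ofEquiv (e : α ≃ β) (M : Set β) [Infinite M] [DenselyOrdered M] [NoMaxOrder M]
    [NoMinOrder M] : DLOPair α :=
  ⟨(LinearOrder.lift' e e.injective, e ⁻¹' M), isDLOPair_lift e M⟩

theorem exists_orderIso_of_iso (e : α ≃ β) (e' : α ≃ β') (M : Set β) (M' : Set β')
    [Infinite M] [DenselyOrdered M] [NoMaxOrder M] [NoMinOrder M]
    [Infinite M'] [DenselyOrdered M'] [NoMaxOrder M'] [NoMinOrder M']
    (h : Iso (ofEquiv e M) (ofEquiv e' M')) : ∃ G : β ≃o β', ∀ x, x ∈ M ↔ G x ∈ M' := by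
  obtain ⟨f, hle, hmem⟩ := h
  refine ⟨⟨e.symm.trans (f.trans e'), fun {x y} => ?_⟩, fun x => ?_⟩
  · have h : e (e.symm x) ≤ e (e.symm y) ↔ e' (f (e.symm x)) ≤ e' (f (e.symm y)) := hle _ _
    rw [e.apply_symm_apply, e.apply_symm_apply] at h
    exact h.symm
  · have h : e (e.symm x) ∈ M ↔ e' (f (e.symm x)) ∈ M' := hmem _
    rwa [e.apply_symm_apply] at h

end OfEquiv

def innerSet : Set ℚ := Iio 0 ∪ ⋃ n : ℕ, Ioo ((n : ℚ) + 1 / 2) (n + 1)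

def gap (S : Set ℕ) (n : ℕ) : Set ℚ :=
  {q ∈ Ioo (n : ℚ) (n + 1 / 2) | n ∈ S → q = n + 1 / 4}

def outerSet (S : Set ℕ) : Set ℚ := innerSet ∪ ⋃ n, gap S n

variable {S : Set ℕ}

theorem isOpen_innerSet : IsOpen innerSet :=
  isOpen_Iio.union (isOpen_iUnion fun _ => isOpen_Ioo)

theorem exists_mem_innerSet_gt (a : ℚ) : ∃ m ∈ innerSet, a < m := by
  obtain ⟨n, hn⟩ := exists_nat_gt a
  exact ⟨n + 3 / 4, Or.inr (mem_iUnion.2 ⟨n, by norm_num, by norm_num⟩), by linarith⟩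

theorem exists_mem_innerSet_lt (a : ℚ) : ∃ m ∈ innerSet, m < a :=
  ⟨min a 0 - 1, Or.inl (by simp only [mem_Iio]; linarith [min_le_right a 0]),
    by linarith [min_le_left a 0]⟩

theorem innerSet_subset_outerSet (S : Set ℕ) : innerSet ⊆ outerSet S := subset_union_left

theorem gap_subset_outerSet (S : Set ℕ) (n : ℕ) : gap S n ⊆ outerSet S :=
  fun _ hq => Or.inr (mem_iUnion.2 ⟨n, hq⟩)

theorem gap_subset_Ioo (S : Set ℕ) (n : ℕ) : gap S n ⊆ Ioo (n : ℚ) (n + 1 / 2) :=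
  sep_subset _ _

theorem quarter_mem_gap (S : Set ℕ) (n : ℕ) : (n : ℚ) + 1 / 4 ∈ gap S n :=
  ⟨⟨by linarith, by linarith⟩, fun _ => rfl⟩

theorem notMem_innerSet_of_mem_Ioo {q : ℚ} {n : ℕ} (hq : q ∈ Ioo (n : ℚ) (n + 1 / 2)) :
    q ∉ innerSet := by
  rintro (hneg | hk)
  · linarith [hq.1, (Nat.cast_nonneg n : (0 : ℚ) ≤ n), mem_Iio.1 hneg]
  · obtain ⟨k, hk1, hk2⟩ := mem_iUnion.1 hk
    have hkn : (k : ℚ) < n := by linarith [hq.2]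
    have : (k : ℚ) + 1 ≤ n := by exact_mod_cast Nat.cast_lt.1 hkn
    linarith [hq.1]

theorem floor_eq_of_mem_Ioo {q : ℚ} {n : ℕ} (hq : q ∈ Ioo (n : ℚ) (n + 1 / 2)) : ⌊q⌋₊ = n :=
  (Nat.floor_eq_iff (by linarith [hq.1, (Nat.cast_nonneg n : (0 : ℚ) ≤ n)])).2
    ⟨hq.1.le, by linarith [hq.2]⟩

theorem inter_Ioo_nonempty_iff_lt {x y : ℚ} {i j : ℕ} (hx : x ∈ Ioo (i : ℚ) (i + 1 / 2))
    (hy : y ∈ Ioo (j : ℚ) (j + 1 / 2)) : (innerSet ∩ Ioo x y).Nonempty ↔ i < j := by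
  constructor
  · rintro ⟨m, hm, hxm, hmy⟩
    by_contra! hji
    have : (j : ℚ) ≤ i := by exact_mod_cast hji
    exact notMem_innerSet_of_mem_Ioo ⟨hx.1.trans hxm, by linarith [hy.2]⟩ hm
  · intro hij
    have : (i : ℚ) + 1 ≤ j := by exact_mod_cast hij
    exact ⟨i + 3 / 4, Or.inr (mem_iUnion.2 ⟨i, by norm_num, by norm_num⟩),
      by linarith [hx.2], by linarith [hy.1]⟩

theorem exists_mem_gap {q : ℚ} (hq : q ∈ outerSet S) (hqM : q ∉ innerSet) : ∃ n, q ∈ gap S n :=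
  mem_iUnion.1 (hq.resolve_left hqM)

theorem mem_gap_floor {q : ℚ} (hq : q ∈ outerSet S) (hqM : q ∉ innerSet) : q ∈ gap S ⌊q⌋₊ := by
  obtain ⟨n, hn⟩ := exists_mem_gap hq hqM
  rwa [floor_eq_of_mem_Ioo (gap_subset_Ioo S n hn)]

theorem outerSet_inter_Ioo_nonempty {a b : ℚ} (ha : a ∈ outerSet S) (hb : b ∈ outerSet S)
    (hab : a < b) : (outerSet S ∩ Ioo a b).Nonempty := by
  have hsub := inter_subset_inter_left (Ioo a b) (innerSet_subset_outerSet S)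
  by_cases haM : a ∈ innerSet
  · exact (isOpen_innerSet.inter_Ioo_nonempty_of_left_mem haM hab).mono hsub
  by_cases hbM : b ∈ innerSet
  · exact (isOpen_innerSet.inter_Ioo_nonempty_of_right_mem hbM hab).mono hsub
  obtain ⟨i, hai⟩ := exists_mem_gap ha haM
  obtain ⟨j, hbj⟩ := exists_mem_gap hb hbM
  have hsep := inter_Ioo_nonempty_iff_lt (gap_subset_Ioo S i hai) (gap_subset_Ioo S j hbj)
  rcases lt_trichotomy i j with hij | rfl | hji
  · exact (hsep.2 hij).mono hsub
  · have hi : i ∉ S := fun hi => hab.ne ((hai.2 hi).trans (hbj.2 hi).symm)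
    obtain ⟨c, hac, hcb⟩ := exists_between hab
    have hc : c ∈ gap S i := ⟨⟨hai.1.1.trans hac, hcb.trans hbj.1.2⟩, fun h => absurd h hi⟩
    exact ⟨c, gap_subset_outerSet S i hc, hac, hcb⟩
  · obtain ⟨m, -, hbm, hma⟩ := (inter_Ioo_nonempty_iff_lt (gap_subset_Ioo S j hbj)
      (gap_subset_Ioo S i hai)).2 hji
    exact absurd (hbm.trans hma) hab.not_gt

instance : Nonempty innerSet := ⟨⟨-1, Or.inl (by norm_num)⟩⟩

instance : DenselyOrdered innerSet :=
  Set.denselyOrdered_coe fun _ ha _ _ hab => isOpen_innerSet.inter_Ioo_nonempty_of_left_mem ha hab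

instance : NoMaxOrder innerSet :=
  ⟨fun a => let ⟨m, hm, h⟩ := exists_mem_innerSet_gt a; ⟨⟨m, hm⟩, h⟩⟩

instance : NoMinOrder innerSet :=
  ⟨fun a => let ⟨m, hm, h⟩ := exists_mem_innerSet_lt a; ⟨⟨m, hm⟩, h⟩⟩

instance : DenselyOrdered (outerSet S) :=
  Set.denselyOrdered_coe fun _ ha _ hb hab => outerSet_inter_Ioo_nonempty ha hb hab

instance : NoMaxOrder (outerSet S) :=
  ⟨fun a => let ⟨m, hm, h⟩ := exists_mem_innerSet_gt a; ⟨⟨m, innerSet_subset_outerSet S hm⟩, h⟩⟩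

instance : NoMinOrder (outerSet S) :=
  ⟨fun a => let ⟨m, hm, h⟩ := exists_mem_innerSet_lt a; ⟨⟨m, innerSet_subset_outerSet S hm⟩, h⟩⟩

instance : Nonempty (outerSet S) :=
  let ⟨m, hm⟩ := (inferInstance : Nonempty innerSet); ⟨⟨m, innerSet_subset_outerSet S hm⟩⟩

def innerIn (S : Set ℕ) : Set (outerSet S) := {x | (x : ℚ) ∈ innerSet}

def innerInOrderIso (S : Set ℕ) : innerIn S ≃o innerSet :=
  ⟨Equiv.subtypeSubtypeEquivSubtype (innerSet_subset_outerSet S ·), Iff.rfl⟩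

instance : Infinite (innerIn S) := (innerInOrderIso S).toEquiv.infinite_iff.2 inferInstance

instance : DenselyOrdered (innerIn S) :=
  (denselyOrdered_iff_of_orderIsoClass (innerInOrderIso S)).2 inferInstance

instance : NoMaxOrder (innerIn S) := (innerInOrderIso S).noMaxOrder

instance : NoMinOrder (innerIn S) := (innerInOrderIso S).noMinOrder

theorem inter_Ioo_nonempty_iff_floor_lt {x y : outerSet S} (hx : x ∉ innerIn S)
    (hy : y ∉ innerIn S) : (innerIn S ∩ Ioo x y).Nonempty ↔ ⌊(x : ℚ)⌋₊ < ⌊(y : ℚ)⌋₊ := by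
  rw [← inter_Ioo_nonempty_iff_lt (gap_subset_Ioo S _ (mem_gap_floor x.2 hx))
    (gap_subset_Ioo S _ (mem_gap_floor y.2 hy))]
  exact ⟨fun ⟨m, hm, hxm, hmy⟩ => ⟨m, hm, hxm, hmy⟩,
    fun ⟨m, hm, hxm, hmy⟩ => ⟨⟨m, innerSet_subset_outerSet S hm⟩, hm, hxm, hmy⟩⟩

def gapPoint (S : Set ℕ) (n : ℕ) : outerSet S :=
  ⟨n + 1 / 4, gap_subset_outerSet S n (quarter_mem_gap S n)⟩

theorem gapPoint_notMem_innerIn (n : ℕ) : gapPoint S n ∉ innerIn S :=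
  notMem_innerSet_of_mem_Ioo (gap_subset_Ioo S n (quarter_mem_gap S n))

theorem floor_gapPoint (n : ℕ) : ⌊(gapPoint S n : ℚ)⌋₊ = n :=
  floor_eq_of_mem_Ioo (gap_subset_Ioo S n (quarter_mem_gap S n))

section Rigidity

variable {S' : Set ℕ} (G : outerSet S ≃o outerSet S')

/-- The index of the gap of `S'` into which `G` maps the `n`-th gap of `S`. -/
def gapMap (n : ℕ) : ℕ := ⌊(G (gapPoint S n) : ℚ)⌋₊

variable (hG : ∀ x, x ∈ innerIn S ↔ G x ∈ innerIn S')
include hG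

theorem floor_map_lt_floor_map_iff {x y : outerSet S} (hx : x ∉ innerIn S) (hy : y ∉ innerIn S) :
    ⌊(G x : ℚ)⌋₊ < ⌊(G y : ℚ)⌋₊ ↔ ⌊(x : ℚ)⌋₊ < ⌊(y : ℚ)⌋₊ := by
  rw [← inter_Ioo_nonempty_iff_floor_lt hx hy,
    ← inter_Ioo_nonempty_iff_floor_lt ((hG x).not.1 hx) ((hG y).not.1 hy),
    G.inter_Ioo_nonempty_iff hG]

theorem floor_map_eq_gapMap {x : outerSet S} (hx : x ∉ innerIn S) :
    ⌊(G x : ℚ)⌋₊ = gapMap G ⌊(x : ℚ)⌋₊ := by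
  have hp := gapPoint_notMem_innerIn (S := S) ⌊(x : ℚ)⌋₊
  have h₁ := floor_map_lt_floor_map_iff G hG hx hp
  have h₂ := floor_map_lt_floor_map_iff G hG hp hx
  rw [floor_gapPoint] at h₁ h₂
  exact le_antisymm (not_lt.1 (h₂.not.2 (lt_irrefl _))) (not_lt.1 (h₁.not.2 (lt_irrefl _)))

theorem gapMap_strictMono : StrictMono (gapMap G) := fun m n hmn =>
  (floor_map_lt_floor_map_iff G hG (gapPoint_notMem_innerIn m) (gapPoint_notMem_innerIn n)).2
    (by rwa [floor_gapPoint, floor_gapPoint])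

theorem gapMap_surjective : Function.Surjective (gapMap G) := fun k => by
  have hz : G.symm (gapPoint S' k) ∉ innerIn S := by
    rw [hG, G.apply_symm_apply]
    exact gapPoint_notMem_innerIn k
  refine ⟨_, (floor_map_eq_gapMap G hG hz).symm.trans ?_⟩
  rw [G.apply_symm_apply, floor_gapPoint]

theorem floor_map_eq {x : outerSet S} (hx : x ∉ innerIn S) : ⌊(G x : ℚ)⌋₊ = ⌊(x : ℚ)⌋₊ := by
  have hid : gapMap G = id := congrArg DFunLike.coe <| Subsingleton.elim
    ((gapMap_strictMono G hG).orderIsoOfSurjective _ (gapMap_surjective G hG)) (OrderIso.refl ℕ)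
  rw [floor_map_eq_gapMap G hG hx, hid, id]

theorem subset_of_orderIso : S' ⊆ S := by
  intro n hn'
  by_contra hn
  have hmapsTo : ∀ x, x ∉ innerIn S → ⌊(x : ℚ)⌋₊ = n → (G x : ℚ) = n + 1 / 4 := by
    intro x hx hxn
    have hGx := mem_gap_floor (G x).2 ((hG x).not.1 hx)
    rw [floor_map_eq G hG hx, hxn] at hGx
    exact hGx.2 hn'
  have hu : (n : ℚ) + 1 / 8 ∈ Ioo (n : ℚ) (n + 1 / 2) := ⟨by linarith, by linarith⟩
  let u : outerSet S := ⟨n + 1 / 8, gap_subset_outerSet S n ⟨hu, fun h => absurd h hn⟩⟩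
  have huv : u = gapPoint S n := G.injective <| Subtype.ext <|
    (hmapsTo u (notMem_innerSet_of_mem_Ioo hu) (floor_eq_of_mem_Ioo hu)).trans
      (hmapsTo _ (gapPoint_notMem_innerIn n) (floor_gapPoint n)).symm
  have := congrArg Subtype.val huv
  norm_num [u, gapPoint] at this

end Rigidity

theorem eq_of_orderIso {S' : Set ℕ} (G : outerSet S ≃o outerSet S')
    (hG : ∀ x, x ∈ innerIn S ↔ G x ∈ innerIn S') : S = S' :=
  (subset_of_orderIso G.symm fun y => by rw [hG, G.apply_symm_apply]).antisymm
    (subset_of_orderIso G hG)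

theorem injective_mk_ofEquiv (e : ∀ S, α ≃ outerSet S) :
    Function.Injective fun S => Quot.mk Iso (ofEquiv (e S) (innerIn S)) := fun _ _ h =>
  let ⟨G, hG⟩ :=
    exists_orderIso_of_iso _ _ _ _ (iso_equivalence.eqvGen_iff.1 (Quot.eqvGen_exact h))
  eq_of_orderIso G hG

end DLOPair

/-- Example 3.3(3) of the paper.  There are exactly `2 ^ ℵ₀`
isomorphism classes of pairs `(M, N)` where `N` is a countable dense linear order
without endpoints (realized as a linear order on a fixed countably infinite universe
`α`), `M ⊆ N` is a suborder which is itself a countable dense linear order without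
endpoints, and `(M₁, N₁) ≅ (M₂, N₂)` iff there is an order isomorphism `f : N₁ ≅ N₂`
with `f(M₁) = M₂`. -/
theorem dlo_pair_classes (α : Type) (hα : #α = ℵ₀) :
    #(Quot fun p q : {x : LinearOrder α × Set α //
        (letI := x.1
         DenselyOrdered α ∧ NoMaxOrder α ∧ NoMinOrder α) ∧
        (letI := x.1
         Infinite x.2 ∧ DenselyOrdered x.2 ∧ NoMaxOrder x.2 ∧ NoMinOrder x.2)} =>
      ∃ f : α ≃ α, (∀ a b : α, p.1.1.le a b ↔ q.1.1.le (f a) (f b)) ∧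
        ∀ a : α, a ∈ p.1.2 ↔ f a ∈ q.1.2) = 2 ^ ℵ₀ := by
  show #(Quot (@DLOPair.Iso α)) = 2 ^ ℵ₀
  have : Infinite α := infinite_iff.2 hα.ge
  have e : ∀ S, α ≃ DLOPair.outerSet S := fun S =>
    Classical.choice (Cardinal.eq.1 (hα.trans (mk_eq_aleph0 _).symm))
  refine le_antisymm (hα ▸ DLOPair.mk_quot_iso_le α) ?_
  calc (2 : Cardinal) ^ ℵ₀ = #(Set ℕ) := by rw [mk_set, mk_nat]
    _ ≤ #(Quot (@DLOPair.Iso α)) := mk_le_of_injective (DLOPair.injective_mk_ofEquiv e)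
end
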